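/- Define u₁(x,t) = 72 e^{2(x+8it)} ( (72+72i) e^{6(x+2it)} − (2+2i) e^{2(x+6it)} + 72i e^{8x} − i ) and u₂(x,t) = −36 e^{4x} ( 18 e^{4(x+3it)} + (8−8i) e^{2x+24it} + 9 e^{12it} + (8+8i) e^{2x} ) + 2592 e^{12(x+it)} + e^{12it}, for x, t ∈ ℝ. Then at every point (x,t) with u₂(x,t) ≠ 0, the function u = u₁/u₂ satisfies the defocusing NLS equation i ∂_t u + ∂_x² u − 2|u|² u = 0. -/

import Mathlib

/-!
Writing `u = g/f`, the quotient rule gives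
`f³ f̄ (i u_t + u_xx - 2|u|²u) = f f̄ (i D_t + D_x²)(g·f) - 2 g (½ D_x²(f·f) f̄ + |g|² f)`,
so `u` solves the defocusing NLS wherever `f ≠ 0` as soon as `g = u₁`, `f = u₂` satisfy the
Hirota bilinear equations `(i D_t + D_x²)(g·f) = 0` and `½ D_x²(f·f) f̄ = -|g|² f`. The latter is
the usual `D_x²(f·f) = -2|g|²` twisted by the phase of `f`: here `u₂` is `e^{12it}` times a real
function. In the variables `p = e^{2x}`, `q = e^{4it}`, with `p̄ = p` and `q̄ = q⁻¹`, both `u₁` and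
`u₂` are polynomials, so the bilinear equations are polynomial identities.
-/

open Complex Set

noncomputable section

/-- Numerator of the exact solution generated with poles `k₁ = i/2`, `k₂ = i` and residue
data `c₁ = 1`, `c₂ = 1+i`. -/
def u₁ (x t : ℝ) : ℂ :=
  72 * Complex.exp (2 * ((x : ℂ) + 8 * Complex.I * t)) *
    ((72 + 72 * Complex.I) * Complex.exp (6 * ((x : ℂ) + 2 * Complex.I * t)) -
      (2 + 2 * Complex.I) * Complex.exp (2 * ((x : ℂ) + 6 * Complex.I * t)) +
      72 * Complex.I * Complex.exp (8 * (x : ℂ)) - Complex.I)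

/-- Denominator of the exact solution generated with poles `k₁ = i/2`, `k₂ = i` and
residue data `c₁ = 1`, `c₂ = 1+i`. -/
def u₂ (x t : ℝ) : ℂ :=
  -36 * Complex.exp (4 * (x : ℂ)) *
      (18 * Complex.exp (4 * ((x : ℂ) + 3 * Complex.I * t)) +
        (8 - 8 * Complex.I) * Complex.exp (2 * (x : ℂ) + 24 * Complex.I * t) +
        9 * Complex.exp (12 * Complex.I * t) +
        (8 + 8 * Complex.I) * Complex.exp (2 * (x : ℂ))) +
    2592 * Complex.exp (12 * ((x : ℂ) + Complex.I * t)) +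
    Complex.exp (12 * Complex.I * t)

open ComplexConjugate

theorem deriv_deriv_div {𝕜 𝕜' : Type*} [NontriviallyNormedField 𝕜]
    [NontriviallyNormedField 𝕜'] [NormedAlgebra 𝕜 𝕜'] {g f g' f' : 𝕜 → 𝕜'} {g'' f'' : 𝕜'}
    {x : 𝕜} (hg : ∀ y, HasDerivAt g (g' y) y) (hg' : HasDerivAt g' g'' x)
    (hf : ∀ y, HasDerivAt f (f' y) y) (hf' : HasDerivAt f' f'' x) (hfx : f x ≠ 0) :
    deriv (fun y => deriv (fun z => g z / f z) y) x =
      ((g'' * f x - g x * f'') * f x - 2 * f' x * (g' x * f x - g x * f' x)) / f x ^ 3 := by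
  have hne : ∀ᶠ y in nhds x, f y ≠ 0 := (hf x).continuousAt.eventually_ne hfx
  have hquot : (fun y => deriv (fun z => g z / f z) y) =ᶠ[nhds x]
      fun y => (g' y * f y - g y * f' y) / f y ^ 2 :=
    hne.mono fun y hy => ((hg y).div (hf y) hy).deriv
  have hquot' : HasDerivAt (fun y => (g' y * f y - g y * f' y) / f y ^ 2) _ x :=
    ((hg'.mul (hf x)).sub ((hg x).mul hf')).div ((hf x).pow 2) (pow_ne_zero 2 hfx)
  rw [hquot.deriv_eq, hquot'.deriv]
  simp only [Pi.sub_apply, Pi.mul_apply]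
  field_simp
  ring

theorem defocusingNLS_div_of_hirota {g f gt ft gx fx gxx fxx : ℂ} (hf : f ≠ 0)
    (hgf : I * (gt * f - g * ft) + (gxx * f - 2 * gx * fx + g * fxx) = 0)
    (hff : (f * fxx - fx ^ 2) * conj f + g * conj g * f = 0) :
    I * ((gt * f - g * ft) / f ^ 2)
      + ((gxx * f - g * fxx) * f - 2 * fx * (gx * f - g * fx)) / f ^ 3
      - 2 * (‖g / f‖ : ℂ) ^ 2 * (g / f) = 0 := by
  have hf' : conj f ≠ 0 := (map_ne_zero _).mpr hf
  rw [← mul_conj', map_div₀]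
  field_simp
  linear_combination f * conj f * hgf - 2 * g * hff

theorem hasDerivAt_cexp_mul_pow (μ : ℂ) (m : ℕ) (s : ℝ) :
    HasDerivAt (fun s : ℝ => cexp (μ * s) ^ m) (m * μ * cexp (μ * s) ^ m) s := by
  have hlin : HasDerivAt (fun s : ℝ => m * μ * (s : ℂ)) (m * μ) s := by
    simpa using (hasDerivAt_id s).ofReal_comp.const_mul ((m : ℂ) * μ)
  have hpow : (fun s : ℝ => cexp (μ * s) ^ m) = fun s : ℝ => cexp (m * μ * s) := by
    funext s; rw [← Complex.exp_nat_mul, mul_assoc]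
  rw [hpow, ← Complex.exp_nat_mul, ← mul_assoc]
  exact hlin.cexp.congr_deriv (mul_comm _ _)

theorem cexp_mul_ofNat (z : ℂ) (n : ℕ) [n.AtLeastTwo] :
    cexp (z * no_index (OfNat.ofNat n)) = cexp z ^ (OfNat.ofNat n : ℕ) := by
  rw [mul_comm]; exact_mod_cast Complex.exp_nat_mul z n

/-- An entry `(c, m, n)` stands for the term `c e^{2mx} e^{4int}`: all exponents occurring in `u₁`
and `u₂` are integer combinations of `2x` and `4it`. -/
abbrev ExpPoly := List (ℂ × ℕ × ℕ)

namespace ExpPoly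

def eval (P : ExpPoly) (x t : ℝ) : ℂ :=
  (P.map fun a => a.1 * cexp (2 * x) ^ a.2.1 * cexp (4 * I * t) ^ a.2.2).sum

def dx (P : ExpPoly) : ExpPoly :=
  P.map fun a => (2 * a.2.1 * a.1, a.2)

def dt (P : ExpPoly) : ExpPoly :=
  P.map fun a => (4 * I * a.2.2 * a.1, a.2)

theorem hasDerivAt_eval_x (P : ExpPoly) (x t : ℝ) :
    HasDerivAt (fun x => P.eval x t) (P.dx.eval x t) x := by
  induction P with
  | nil => simpa [eval, dx] using hasDerivAt_const x (0 : ℂ)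
  | cons a P ih =>
    have ha := ((hasDerivAt_cexp_mul_pow 2 a.2.1 x).const_mul a.1).mul_const
      (cexp (4 * I * t) ^ a.2.2)
    simp only [eval, dx, List.map_cons, List.sum_cons] at ih ⊢
    exact (ha.add ih).congr_deriv (by ring)

theorem hasDerivAt_eval_t (P : ExpPoly) (x t : ℝ) :
    HasDerivAt (fun t => P.eval x t) (P.dt.eval x t) t := by
  induction P with
  | nil => simpa [eval, dt] using hasDerivAt_const t (0 : ℂ)
  | cons a P ih =>
    have ha := (hasDerivAt_cexp_mul_pow (4 * I) a.2.2 t).const_mul (a.1 * cexp (2 * x) ^ a.2.1)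
    simp only [eval, dt, List.map_cons, List.sum_cons] at ih ⊢
    exact (ha.add ih).congr_deriv (by ring)

end ExpPoly

def u₁ExpPoly : ExpPoly :=
  [(5184 + 5184 * I, 4, 7), (-144 - 144 * I, 2, 7), (5184 * I, 5, 4), (-72 * I, 1, 4)]

def u₂ExpPoly : ExpPoly :=
  [(-648, 4, 3), (-288 + 288 * I, 3, 6), (-324, 2, 3), (-288 - 288 * I, 3, 0), (2592, 6, 3),
    (1, 0, 3)]

theorem u₁_eq_eval : u₁ = u₁ExpPoly.eval := by
  ext x t
  simp only [u₁, ExpPoly.eval, u₁ExpPoly, List.map_cons, List.map_nil, List.sum_cons,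
    List.sum_nil]
  ring_nf
  simp only [Complex.exp_add, cexp_mul_ofNat]
  ring_nf

theorem u₂_eq_eval : u₂ = u₂ExpPoly.eval := by
  ext x t
  simp only [u₂, ExpPoly.eval, u₂ExpPoly, List.map_cons, List.map_nil, List.sum_cons,
    List.sum_nil]
  ring_nf
  simp only [Complex.exp_add, cexp_mul_ofNat]
  ring_nf

theorem hirota_u₁_u₂ (x t : ℝ) :
    I * (u₁ExpPoly.dt.eval x t * u₂ExpPoly.eval x t
        - u₁ExpPoly.eval x t * u₂ExpPoly.dt.eval x t)
      + (u₁ExpPoly.dx.dx.eval x t * u₂ExpPoly.eval x t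
        - 2 * u₁ExpPoly.dx.eval x t * u₂ExpPoly.dx.eval x t
        + u₁ExpPoly.eval x t * u₂ExpPoly.dx.dx.eval x t) = 0 := by
  simp only [ExpPoly.eval, ExpPoly.dx, ExpPoly.dt, u₁ExpPoly, u₂ExpPoly, List.map_cons,
    List.map_nil, List.sum_cons, List.sum_nil]
  generalize cexp (2 * x) = p
  generalize cexp (4 * I * t) = q
  push_cast
  ring_nf
  simp only [I_sq, I_pow_three, I_pow_four]
  ring_nf

theorem hirota_u₂_u₂ (x t : ℝ) :
    (u₂ExpPoly.eval x t * u₂ExpPoly.dx.dx.eval x t - u₂ExpPoly.dx.eval x t ^ 2)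
        * conj (u₂ExpPoly.eval x t)
      + u₁ExpPoly.eval x t * conj (u₁ExpPoly.eval x t) * u₂ExpPoly.eval x t = 0 := by
  have hp : conj (cexp (2 * x)) = cexp (2 * x) := by
    rw [← Complex.exp_conj]; simp [map_ofNat]
  have hq : conj (cexp (4 * I * t)) = (cexp (4 * I * t))⁻¹ := by
    rw [← Complex.exp_conj, ← Complex.exp_neg]; simp [map_ofNat]
  have hq0 : cexp (4 * I * t) ≠ 0 := Complex.exp_ne_zero _
  simp only [ExpPoly.eval, ExpPoly.dx, u₁ExpPoly, u₂ExpPoly, List.map_cons, List.map_nil,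
    List.sum_cons, List.sum_nil, Nat.cast_ofNat, Nat.cast_zero, map_add, map_sub, map_neg,
    map_mul, map_pow, map_zero, map_one, map_ofNat, conj_I, hp, hq]
  generalize cexp (2 * x) = p at *
  generalize cexp (4 * I * t) = q at *
  field_simp
  ring_nf
  simp only [I_sq, I_pow_three]
  ring_nf

/-- At every point where `u₂ ≠ 0`, the quotient `u = u₁/u₂` satisfies the defocusing NLS
equation `i u_t + u_xx - 2|u|²u = 0`. -/
theorem ratio_solution_satisfies_NLS :
    ∀ x t : ℝ, u₂ x t ≠ 0 →
      Complex.I * deriv (fun s => u₁ x s / u₂ x s) t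
        + deriv (fun y => deriv (fun z => u₁ z t / u₂ z t) y) x
        - 2 * (‖u₁ x t / u₂ x t‖ : ℂ) ^ 2 * (u₁ x t / u₂ x t) = 0 := by
  intro x t hu
  rw [u₁_eq_eval, u₂_eq_eval] at *
  have hderiv_t : deriv (fun s => u₁ExpPoly.eval x s / u₂ExpPoly.eval x s) t = _ :=
    ((u₁ExpPoly.hasDerivAt_eval_t x t).div (u₂ExpPoly.hasDerivAt_eval_t x t) hu).deriv
  rw [hderiv_t, deriv_deriv_div (fun y => u₁ExpPoly.hasDerivAt_eval_x y t)
    (u₁ExpPoly.dx.hasDerivAt_eval_x x t) (fun y => u₂ExpPoly.hasDerivAt_eval_x y t)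
    (u₂ExpPoly.dx.hasDerivAt_eval_x x t) hu]
  exact defocusingNLS_div_of_hirota hu (hirota_u₁_u₂ x t) (hirota_u₂_u₂ x t)

end
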